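/- arXiv:2106.13461 — 5 statements merged into one kernel-verified Lean document; each statement's English description precedes it below -/
import Mathlib

section
/- Let b : ℝ≥0 → ℝ be locally integrable with upper Bohl exponent β^s. Suppose there exist α > 0 and d ≥ 0 such that ∫_{t₀}^{t} (β^s + ε − b(s)) ds ≥ α(t − t₀) − d for all t ≥ t₀ ≥ 0 (exponential dichotomy estimate for x' = (b(t) − β^s − ε)x). Then for every H with α − d/H > α/2, the approximation β^{H,s} := sup_{t≥0} (1/H)∫_t^{t+H} b(s)ds satisfies β^{H,s} < β^s + ε. -/
open MeasureTheory intervalIntegral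

/-- Key approximation step for finite-window Bohl exponents: under the exponential
dichotomy estimate `∫_{t₀}^{t} (βs + ε − b) ≥ α (t − t₀) − d`, for every window length `H`
with `α − d/H > α/2`, the finite-window exponent `β^{H,s} = sup_{t ≥ 0} (1/H)∫_t^{t+H} b`
satisfies `β^{H,s} < βs + ε`. -/
theorem finite_window_bohl_upper_bound
    (b : ℝ → ℝ)
    (hloc : ∀ t₀ t : ℝ, 0 ≤ t₀ → t₀ ≤ t → IntervalIntegrable b volume t₀ t)
    (βs ε α d H : ℝ) (hε : 0 < ε) (hα : 0 < α) (hd : 0 ≤ d)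
    (hdich : ∀ t₀ t : ℝ, 0 ≤ t₀ → t₀ ≤ t →
      α * (t - t₀) - d ≤ ∫ s in t₀..t, (βs + ε - b s))
    (hH : 0 < H) (hH2 : α / 2 < α - d / H) :
    sSup {y : ℝ | ∃ t : ℝ, 0 ≤ t ∧ y = (1 / H) * ∫ s in t..(t + H), b s} < βs + ε := by
  have key : ∀ t : ℝ, 0 ≤ t → (1 / H) * ∫ s in t..(t + H), b s ≤ βs + ε - α / 2 := by
    intro t ht
    have htH : t ≤ t + H := by linarith
    have hint := hloc t (t + H) ht htH
    have hsplit : (∫ s in t..(t + H), (βs + ε - b s))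
        = (βs + ε) * H - ∫ s in t..(t + H), b s := by
      rw [intervalIntegral.integral_sub (intervalIntegrable_const) hint]
      simp
      ring
    have h1 := hdich t (t + H) ht htH
    rw [hsplit] at h1
    have h2 : α * H - d ≤ (βs + ε) * H - ∫ s in t..(t + H), b s := by
      have : t + H - t = H := by ring
      rw [this] at h1; exact h1
    have h3 : ∫ s in t..(t + H), b s ≤ (βs + ε - α) * H + d := by linarith
    have h4 : (1 / H) * ∫ s in t..(t + H), b s ≤ βs + ε - α + d / H := by
      calc (1 / H) * ∫ s in t..(t + H), b s ≤ (1 / H) * ((βs + ε - α) * H + d) :=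
            mul_le_mul_of_nonneg_left h3 (by positivity)
        _ = βs + ε - α + d / H := by field_simp
    have h5 : βs + ε - α + d / H ≤ βs + ε - α / 2 := by linarith
    linarith
  have hne : ((0 : ℝ)) ∈ {y : ℝ | ∃ t : ℝ, 0 ≤ t ∧ y = (1 / H) * ∫ s in t..(t + H), b s} ∨ True := Or.inr trivial
  have hsup : sSup {y : ℝ | ∃ t : ℝ, 0 ≤ t ∧ y = (1 / H) * ∫ s in t..(t + H), b s}
      ≤ βs + ε - α / 2 := by
    refine csSup_le ⟨(1 / H) * ∫ s in (0:ℝ)..(0 + H), b s, 0, le_rfl, rfl⟩ ?_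
    rintro y ⟨t, ht, rfl⟩
    exact key t ht
  linarith
end

section
/- Let b : ℝ≥0 → ℝ be locally integrable. For every H > 0, the finite-window exponents satisfy β^{H,i} ≤ β^i ≤ β^s ≤ β^{H,s}, where β^{H,i} = inf_{t₀≥0} (1/H)∫_{t₀}^{t₀+H} b(τ)dτ, β^{H,s} = sup_{t₀≥0} (1/H)∫_{t₀}^{t₀+H} b(τ)dτ, β^i = liminf_{t₀→∞, t→∞} (1/t)∫_{t₀}^{t₀+t} b(τ)dτ and β^s is the corresponding limsup. -/
open MeasureTheory intervalIntegral Filter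

/-- Chopping lemma: for any `ε > 0`, eventually (as `t₀ → ∞`, `t → ∞`) the average
`(1/t) ∫_{t₀}^{t₀+t} b` is at least `sInf` of the window averages minus `ε`. -/
lemma bohl_chop (b : ℝ → ℝ) (hmeas : Measurable b) (M : ℝ) (hM : ∀ t : ℝ, |b t| ≤ M)
    (H : ℝ) (hH : 0 < H) (ε : ℝ) (hε : 0 < ε) :
    ∀ᶠ p : ℝ × ℝ in atTop ×ˢ atTop,
      sInf {y : ℝ | ∃ t₀ : ℝ, 0 ≤ t₀ ∧ y = (1 / H) * ∫ τ in t₀..(t₀ + H), b τ} - ε ≤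
        (1 / p.2) * ∫ τ in p.1..(p.1 + p.2), b τ := by
  have hM0 : 0 ≤ M := (abs_nonneg _).trans (hM 0)
  have hbi : ∀ a c : ℝ, IntervalIntegrable b volume a c := fun a c =>
    (_root_.intervalIntegrable_const (c := M)).mono_fun hmeas.aestronglyMeasurable
      (ae_of_all _ fun x => by simpa using (hM x).trans (le_abs_self M))
  have hnorm : ∀ a c : ℝ, |∫ τ in a..c, b τ| ≤ M * |c - a| := by
    intro a c
    have h := intervalIntegral.norm_integral_le_of_norm_le_const
      (a := a) (b := c) (C := M) (f := b) (fun x _ => by simpa using hM x)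
    simpa using h
  set S := {y : ℝ | ∃ t₀ : ℝ, 0 ≤ t₀ ∧ y = (1 / H) * ∫ τ in t₀..(t₀ + H), b τ} with hSdef
  have hSbb : BddBelow S := by
    refine ⟨-M, ?_⟩
    rintro y ⟨t₀, ht₀, rfl⟩
    have h1 : |∫ τ in t₀..(t₀ + H), b τ| ≤ M * H := by
      have h2 := hnorm t₀ (t₀ + H)
      rwa [add_sub_cancel_left, abs_of_pos hH] at h2
    have h3 := neg_le_of_abs_le h1
    have h4 : (0:ℝ) < 1 / H := by positivity
    have h5 := mul_le_mul_of_nonneg_left h3 h4.le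
    have h6 : (1 / H) * -(M * H) = -M := by field_simp
    linarith
  set I := sInf S with hI
  have hwin : ∀ t₀ : ℝ, 0 ≤ t₀ → H * I ≤ ∫ τ in t₀..(t₀ + H), b τ := by
    intro t₀ ht₀
    have hmem : (1 / H) * ∫ τ in t₀..(t₀ + H), b τ ∈ S := ⟨t₀, ht₀, rfl⟩
    have h1 := csInf_le hSbb hmem
    calc H * I ≤ H * ((1 / H) * ∫ τ in t₀..(t₀ + H), b τ) :=
          mul_le_mul_of_nonneg_left h1 hH.le
      _ = ∫ τ in t₀..(t₀ + H), b τ := by field_simp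
  have hstep : ∀ n : ℕ, ∀ t₀ : ℝ, 0 ≤ t₀ →
      (n : ℝ) * H * I ≤ ∫ τ in t₀..(t₀ + (n : ℝ) * H), b τ := by
    intro n
    induction n with
    | zero => intro t₀ ht₀; simp
    | succ n ih =>
      intro t₀ ht₀
      have key : (∫ τ in t₀..(t₀ + H), b τ) +
          ∫ τ in (t₀ + H)..(t₀ + ((n : ℝ) + 1) * H), b τ
          = ∫ τ in t₀..(t₀ + ((n : ℝ) + 1) * H), b τ :=
        integral_add_adjacent_intervals (hbi _ _) (hbi _ _)
      have h2 : (n : ℝ) * H * I ≤ ∫ τ in (t₀ + H)..(t₀ + H + (n : ℝ) * H), b τ :=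
        ih (t₀ + H) (by linarith)
      have heq : t₀ + H + (n : ℝ) * H = t₀ + ((n : ℝ) + 1) * H := by ring
      rw [heq] at h2
      have h1 := hwin t₀ ht₀
      push_cast
      linarith
  have hkey : ∀ t₀ t : ℝ, 0 ≤ t₀ → max 1 (H * (|I| + M) / ε) ≤ t →
      I - ε ≤ (1 / t) * ∫ τ in t₀..(t₀ + t), b τ := by
    intro t₀ t ht₀ ht
    have ht1 : (1 : ℝ) ≤ t := le_trans (le_max_left _ _) ht
    have ht0 : (0 : ℝ) < t := lt_of_lt_of_le one_pos ht1
    set n := ⌊t / H⌋₊ with hn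
    have hn1 : (n : ℝ) * H ≤ t := by
      have h := Nat.floor_le (le_of_lt (div_pos ht0 hH))
      calc (n : ℝ) * H ≤ (t / H) * H := by nlinarith
        _ = t := by field_simp
    have hn2 : t < ((n : ℝ) + 1) * H := by
      have h := Nat.lt_floor_add_one (t / H)
      calc t = (t / H) * H := by field_simp
        _ < ((n : ℝ) + 1) * H := by nlinarith
    have hsplit : (∫ τ in t₀..(t₀ + (n : ℝ) * H), b τ) +
        ∫ τ in (t₀ + (n : ℝ) * H)..(t₀ + t), b τ = ∫ τ in t₀..(t₀ + t), b τ :=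
      integral_add_adjacent_intervals (hbi _ _) (hbi _ _)
    have h1 : (n : ℝ) * H * I ≤ ∫ τ in t₀..(t₀ + (n : ℝ) * H), b τ := hstep n t₀ ht₀
    have h2 : -(M * H) ≤ ∫ τ in (t₀ + (n : ℝ) * H)..(t₀ + t), b τ := by
      have hb := hnorm (t₀ + (n : ℝ) * H) (t₀ + t)
      have habs : |t₀ + t - (t₀ + (n : ℝ) * H)| ≤ H := by
        rw [abs_of_nonneg (by linarith)]; linarith
      have h3 := neg_le_of_abs_le hb
      nlinarith [abs_nonneg (t₀ + t - (t₀ + (n : ℝ) * H))]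
    have h3 : t * I - H * |I| ≤ (n : ℝ) * H * I := by
      have h4 : |((n : ℝ) * H - t) * I| ≤ H * |I| := by
        rw [abs_mul]
        have h5 : |(n : ℝ) * H - t| ≤ H := by
          rw [abs_of_nonpos (by linarith)]; linarith
        exact mul_le_mul_of_nonneg_right h5 (abs_nonneg I)
      have h6 := neg_le_of_abs_le h4
      nlinarith
    have hint : t * I - H * (|I| + M) ≤ ∫ τ in t₀..(t₀ + t), b τ := by linarith
    have hε' : H * (|I| + M) / t ≤ ε := by
      have htT : H * (|I| + M) / ε ≤ t := le_trans (le_max_right _ _) ht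
      rw [div_le_iff₀ ht0]
      calc H * (|I| + M) = (H * (|I| + M) / ε) * ε := by field_simp
        _ ≤ t * ε := mul_le_mul_of_nonneg_right htT hε.le
        _ = ε * t := mul_comm _ _
    have hfinal : I - H * (|I| + M) / t ≤ (1 / t) * ∫ τ in t₀..(t₀ + t), b τ := by
      have h7 := mul_le_mul_of_nonneg_left hint (le_of_lt (one_div_pos.mpr ht0))
      calc I - H * (|I| + M) / t = (1 / t) * (t * I - H * (|I| + M)) := by
            field_simp
        _ ≤ _ := h7
    linarith
  have hev1 : ∀ᶠ p : ℝ × ℝ in atTop ×ˢ atTop, 0 ≤ p.1 :=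
    (eventually_ge_atTop (0:ℝ)).prod_inl atTop
  have hev2 : ∀ᶠ p : ℝ × ℝ in atTop ×ˢ atTop, max 1 (H * (|I| + M) / ε) ≤ p.2 :=
    (eventually_ge_atTop _).prod_inr atTop
  filter_upwards [hev1, hev2] with p hp1 hp2
  exact hkey p.1 p.2 hp1 hp2

/-- For every window length `H > 0`, the finite-window Bohl approximations bracket the
lower and upper Bohl exponents: `β^{H,i} ≤ β^i ≤ β^s ≤ β^{H,s}`. The Bohl exponents are
the liminf/limsup of the averages `(1/t) ∫_{t₀}^{t₀+t} b` as `t₀ → ∞` and `t → ∞`. -/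
theorem finite_window_brackets_bohl
    (b : ℝ → ℝ) (hmeas : Measurable b) (M : ℝ) (hM : ∀ t : ℝ, |b t| ≤ M)
    (H : ℝ) (hH : 0 < H) :
    sInf {y : ℝ | ∃ t₀ : ℝ, 0 ≤ t₀ ∧ y = (1 / H) * ∫ τ in t₀..(t₀ + H), b τ} ≤
      liminf (fun p : ℝ × ℝ => (1 / p.2) * ∫ τ in p.1..(p.1 + p.2), b τ)
        (atTop ×ˢ atTop) ∧
    liminf (fun p : ℝ × ℝ => (1 / p.2) * ∫ τ in p.1..(p.1 + p.2), b τ)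
        (atTop ×ˢ atTop) ≤
      limsup (fun p : ℝ × ℝ => (1 / p.2) * ∫ τ in p.1..(p.1 + p.2), b τ)
        (atTop ×ˢ atTop) ∧
    limsup (fun p : ℝ × ℝ => (1 / p.2) * ∫ τ in p.1..(p.1 + p.2), b τ)
        (atTop ×ˢ atTop) ≤
      sSup {y : ℝ | ∃ t₀ : ℝ, 0 ≤ t₀ ∧ y = (1 / H) * ∫ τ in t₀..(t₀ + H), b τ} := by
  have hM0 : 0 ≤ M := (abs_nonneg _).trans (hM 0)
  have hnorm : ∀ a c : ℝ, |∫ τ in a..c, b τ| ≤ M * |c - a| := by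
    intro a c
    have h := intervalIntegral.norm_integral_le_of_norm_le_const
      (a := a) (b := c) (C := M) (f := b) (fun x _ => by simpa using hM x)
    simpa using h
  set f : ℝ × ℝ → ℝ := fun p => (1 / p.2) * ∫ τ in p.1..(p.1 + p.2), b τ with hf
  set S := {y : ℝ | ∃ t₀ : ℝ, 0 ≤ t₀ ∧ y = (1 / H) * ∫ τ in t₀..(t₀ + H), b τ} with hSdef
  -- eventual two-sided bound on f
  have habs : ∀ᶠ p : ℝ × ℝ in atTop ×ˢ atTop, |f p| ≤ M := by
    filter_upwards [(eventually_ge_atTop (1:ℝ)).prod_inr (atTop : Filter ℝ)] with p hp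
    have hp0 : (0:ℝ) < p.2 := lt_of_lt_of_le one_pos hp
    have h1 : |∫ τ in p.1..(p.1 + p.2), b τ| ≤ M * p.2 := by
      have h2 := hnorm p.1 (p.1 + p.2)
      rwa [add_sub_cancel_left, abs_of_pos hp0] at h2
    have : |f p| = (1 / p.2) * |∫ τ in p.1..(p.1 + p.2), b τ| := by
      rw [hf, abs_mul, abs_of_pos (by positivity : (0:ℝ) < 1 / p.2)]
    rw [this]
    calc (1 / p.2) * |∫ τ in p.1..(p.1 + p.2), b τ| ≤ (1 / p.2) * (M * p.2) := by
          exact mul_le_mul_of_nonneg_left h1 (by positivity)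
      _ = M := by field_simp
  have hbd_le : IsBoundedUnder (· ≤ ·) (atTop ×ˢ atTop) f :=
    ⟨M, eventually_map.mpr (habs.mono fun p hp => (le_abs_self _).trans hp)⟩
  have hbd_ge : IsBoundedUnder (· ≥ ·) (atTop ×ˢ atTop) f :=
    ⟨-M, eventually_map.mpr (habs.mono fun p hp => neg_le_of_abs_le hp)⟩
  refine ⟨?_, liminf_le_limsup hbd_le hbd_ge, ?_⟩
  · refine le_of_forall_sub_le fun ε hε => ?_
    exact le_liminf_of_le hbd_le.isCoboundedUnder_ge (bohl_chop b hmeas M hM H hH ε hε)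
  · -- apply the chopping lemma to -b
    have hSne : S.Nonempty := ⟨_, 0, le_refl 0, rfl⟩
    have hSba : BddAbove S := by
      refine ⟨M, ?_⟩
      rintro y ⟨t₀, ht₀, rfl⟩
      have h1 : |∫ τ in t₀..(t₀ + H), b τ| ≤ M * H := by
        have h2 := hnorm t₀ (t₀ + H)
        rwa [add_sub_cancel_left, abs_of_pos hH] at h2
      have h3 := le_of_abs_le h1
      have h4 : (0:ℝ) < 1 / H := by positivity
      have h5 := mul_le_mul_of_nonneg_left h3 h4.le
      have h6 : (1 / H) * (M * H) = M := by field_simp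
      linarith
    refine le_of_forall_pos_le_add fun ε hε => ?_
    have hchop := bohl_chop (fun t => -b t) hmeas.neg M
      (fun t => by simpa using hM t) H hH ε hε
    set I' := sInf {y : ℝ | ∃ t₀ : ℝ, 0 ≤ t₀ ∧
      y = (1 / H) * ∫ τ in t₀..(t₀ + H), -b τ} with hI'
    have hle : -sSup S ≤ I' := by
      rw [hI']
      refine le_csInf ⟨_, 0, le_refl 0, rfl⟩ ?_
      rintro y ⟨t₀, ht₀, rfl⟩
      have heq : (1 / H) * ∫ τ in t₀..(t₀ + H), -b τ
          = -((1 / H) * ∫ τ in t₀..(t₀ + H), b τ) := by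
        rw [intervalIntegral.integral_neg]; ring
      rw [heq, neg_le_neg_iff]
      exact le_csSup hSba ⟨t₀, ht₀, rfl⟩
    refine limsup_le_of_le hbd_ge.isCoboundedUnder_le ?_
    filter_upwards [hchop] with p hp
    have heq : (1 / p.2) * ∫ τ in p.1..(p.1 + p.2), -b τ = -f p := by
      rw [hf, intervalIntegral.integral_neg]; ring
    rw [heq] at hp
    have : I' - ε ≤ -f p := hp
    linarith
end

section
/- Let P : ℝ≥0 → ℝ^{n×n} be a bounded continuously differentiable symmetric solution of the Lyapunov differential equation P' + A(t)ᵀP + PA(t) + Q(t) = 0, where x' = A(t)x is uniformly exponentially stable and q₁I ⪯ Q(t) ⪯ q₂I with q₁ > 0. Then P is unique among bounded solutions and P(t) = ∫_t^∞ Φ(s,t)ᵀ Q(s) Φ(s,t) ds. -/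
open MeasureTheory Filter
open scoped Topology
open scoped RealInnerProductSpace

noncomputable def adjCLM (n : ℕ) :
    (EuclideanSpace ℝ (Fin n) →L[ℝ] EuclideanSpace ℝ (Fin n)) →L[ℝ]
      (EuclideanSpace ℝ (Fin n) →L[ℝ] EuclideanSpace ℝ (Fin n)) :=
  LinearMap.mkContinuous
    { toFun := ContinuousLinearMap.adjoint
      map_add' := fun f g => map_add _ f g
      map_smul' := fun c f => by
        simpa using (ContinuousLinearMap.adjoint :
          (EuclideanSpace ℝ (Fin n) →L[ℝ] EuclideanSpace ℝ (Fin n)) ≃ₗᵢ⋆[ℝ] _).map_smulₛₗ c f }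
    1 (fun f => by rw [one_mul]; exact le_of_eq (LinearIsometryEquiv.norm_map _ f))

@[simp] lemma adjCLM_apply (n : ℕ) (f : EuclideanSpace ℝ (Fin n) →L[ℝ] EuclideanSpace ℝ (Fin n)) :
    adjCLM n f = ContinuousLinearMap.adjoint f := rfl

-- norm bound for nonneg selfadjoint operator
lemma opnorm_le_of_quadform {E : Type*} [NormedAddCommGroup E] [InnerProductSpace ℝ E]
    [CompleteSpace E] (T : E →L[ℝ] E) (hT : IsSelfAdjoint T) {c : ℝ} (hc : 0 ≤ c)
    (h0 : ∀ x, 0 ≤ ⟪T x, x⟫) (h1 : ∀ x, ⟪T x, x⟫ ≤ c * ‖x‖ ^ 2) : ‖T‖ ≤ c := by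
  refine T.opNorm_le_bound hc fun x => ?_
  rcases eq_or_ne (T x) 0 with h | h
  · simp [h]; positivity
  have hTx : 0 < ‖T x‖ := norm_pos_iff.mpr h
  set y : E := (‖x‖ / ‖T x‖) • T x with hy
  have hyn : ‖y‖ = ‖x‖ := by
    rw [hy, norm_smul, Real.norm_eq_abs, abs_div, abs_of_nonneg (norm_nonneg x),
      abs_of_nonneg (norm_nonneg (T x)), div_mul_cancel₀ _ (ne_of_gt hTx)]
  have hsym : ∀ a b : E, ⟪T a, b⟫ = ⟪T b, a⟫ := by
    intro a b
    have h1 := ContinuousLinearMap.adjoint_inner_left T a b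
    rw [ContinuousLinearMap.isSelfAdjoint_iff'.mp hT] at h1
    rw [h1]
    exact real_inner_comm _ _
  have hpol : (4 : ℝ) * ⟪T x, y⟫ = ⟪T (x + y), x + y⟫ - ⟪T (x - y), x - y⟫ := by
    simp only [map_add, map_sub, inner_add_left, inner_add_right, inner_sub_left, inner_sub_right]
    rw [hsym y x]; ring
  have hb1 : ⟪T (x + y), x + y⟫ ≤ c * ‖x + y‖ ^ 2 := h1 _
  have hb2 : 0 ≤ ⟪T (x - y), x - y⟫ := h0 _
  have hpar : ‖x + y‖ ^ 2 ≤ 2 * ‖x‖ ^ 2 + 2 * ‖y‖ ^ 2 := by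
    have := norm_add_sq_real x y
    nlinarith [real_inner_le_norm x y, sq_nonneg (‖x‖ - ‖y‖)]
  have hxy : ⟪T x, y⟫ = ‖x‖ * ‖T x‖ := by
    rw [hy, inner_smul_right, real_inner_self_eq_norm_sq]
    field_simp
  have : 4 * (‖x‖ * ‖T x‖) ≤ c * (2 * ‖x‖ ^ 2 + 2 * ‖x‖ ^ 2) := by
    rw [← hxy]
    calc 4 * ⟪T x, y⟫ = ⟪T (x + y), x + y⟫ - ⟪T (x - y), x - y⟫ := hpol
      _ ≤ c * ‖x + y‖ ^ 2 := by linarith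
      _ ≤ c * (2 * ‖x‖ ^ 2 + 2 * ‖y‖ ^ 2) := by nlinarith
      _ = c * (2 * ‖x‖ ^ 2 + 2 * ‖x‖ ^ 2) := by rw [hyn]
  rcases eq_or_ne x 0 with hx | hx
  · exact absurd (by simp [hx]) h
  have hxn : 0 < ‖x‖ := norm_pos_iff.mpr hx
  nlinarith

set_option maxHeartbeats 1000000 in
lemma lyap_key
    (n : ℕ)
    (A : ℝ → EuclideanSpace ℝ (Fin n) →L[ℝ] EuclideanSpace ℝ (Fin n))
    (Φ : ℝ → ℝ → EuclideanSpace ℝ (Fin n) →L[ℝ] EuclideanSpace ℝ (Fin n))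
    (hΦ_id : ∀ s : ℝ, Φ s s = 1)
    (hΦ_deriv : ∀ s t : ℝ, HasDerivAt (fun τ => Φ τ s) ((A t).comp (Φ t s)) t)
    (K μ : ℝ) (hK : 1 ≤ K) (hμ : 0 < μ)
    (hΦ_bound : ∀ s t : ℝ, 0 ≤ s → s ≤ t → ‖Φ t s‖ ≤ K * Real.exp (-μ * (t - s)))
    (Q : ℝ → EuclideanSpace ℝ (Fin n) →L[ℝ] EuclideanSpace ℝ (Fin n))
    (hQcont : Continuous Q) (q₂ : ℝ) (hq₂ : 0 ≤ q₂) (hQnorm : ∀ s : ℝ, ‖Q s‖ ≤ q₂)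
    (P : ℝ → EuclideanSpace ℝ (Fin n) →L[ℝ] EuclideanSpace ℝ (Fin n))
    (MP : ℝ) (hPbdd : ∀ t : ℝ, 0 ≤ t → ‖P t‖ ≤ MP)
    (hPode : ∀ t : ℝ, 0 ≤ t →
      HasDerivAt P
        (-(ContinuousLinearMap.adjoint (A t)).comp (P t) - (P t).comp (A t) - Q t) t)
    (t : ℝ) (ht : 0 ≤ t) :
    P t = ∫ s in Set.Ici t,
        (ContinuousLinearMap.adjoint (Φ s t)).comp ((Q s).comp (Φ s t)) := by
  set F : ℝ → EuclideanSpace ℝ (Fin n) →L[ℝ] EuclideanSpace ℝ (Fin n) :=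
    fun s => (ContinuousLinearMap.adjoint (Φ s t)).comp ((Q s).comp (Φ s t)) with hF
  set g : ℝ → EuclideanSpace ℝ (Fin n) →L[ℝ] EuclideanSpace ℝ (Fin n) :=
    fun s => (ContinuousLinearMap.adjoint (Φ s t)).comp ((P s).comp (Φ s t)) with hg
  have hΦc : Continuous fun s => Φ s t :=
    continuous_iff_continuousAt.mpr fun s => (hΦ_deriv t s).continuousAt
  have hadjc : Continuous fun s => ContinuousLinearMap.adjoint (Φ s t) :=
    (adjCLM n).continuous.comp hΦc
  have hFcont : Continuous F := hadjc.clm_comp (hQcont.clm_comp hΦc)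
  -- derivative of g
  have hg_deriv : ∀ s : ℝ, 0 ≤ s → HasDerivAt g (-(F s)) s := by
    intro s hs
    have h1 : HasDerivAt (fun τ => ContinuousLinearMap.adjoint (Φ τ t))
        (ContinuousLinearMap.adjoint ((A s).comp (Φ s t))) s :=
      (adjCLM n).hasFDerivAt.comp_hasDerivAt s (hΦ_deriv t s)
    have h23 := (hPode s hs).clm_comp (hΦ_deriv t s)
    have hgd := h1.clm_comp h23
    convert hgd using 1
    rw [ContinuousLinearMap.adjoint_comp]
    simp only [hF, ← ContinuousLinearMap.mul_def]
    noncomm_ring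
  -- FTC on [t, T]
  have hadj1 : ContinuousLinearMap.adjoint
      (1 : EuclideanSpace ℝ (Fin n) →L[ℝ] EuclideanSpace ℝ (Fin n)) = 1 := by
    rw [ContinuousLinearMap.one_def, ContinuousLinearMap.adjoint_id]
  have hgt : g t = P t := by
    simp [hg, hΦ_id t, hadj1, ContinuousLinearMap.one_def, ContinuousLinearMap.adjoint_id]
  have hFTC : ∀ T : ℝ, t ≤ T → P t = g T + ∫ s in t..T, F s := by
    intro T hT
    have hderiv : ∀ s ∈ Set.uIcc t T, HasDerivAt g (-(F s)) s := by
      intro s hs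
      rw [Set.uIcc_of_le hT] at hs
      exact hg_deriv s (le_trans ht hs.1)
    have hint : IntervalIntegrable (fun s => -(F s)) volume t T :=
      (hFcont.neg).intervalIntegrable t T
    have := intervalIntegral.integral_eq_sub_of_hasDerivAt hderiv hint
    rw [intervalIntegral.integral_neg] at this
    have h2 : (∫ s in t..T, F s) = g t - g T := by
      have h3 := congrArg Neg.neg this
      simpa [neg_sub] using h3
    rw [h2, hgt]
    abel
  -- integrability of F on [t, ∞)
  have hq₂' : ∀ s : ℝ, ‖Q s‖ ≤ q₂ := hQnorm
  set C : ℝ := q₂ * (K * K) * Real.exp (2 * μ * t) with hC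
  have hcomp_bound : ∀ (B : EuclideanSpace ℝ (Fin n) →L[ℝ] EuclideanSpace ℝ (Fin n)) (s : ℝ),
      ‖(ContinuousLinearMap.adjoint (Φ s t)).comp (B.comp (Φ s t))‖ ≤ ‖Φ s t‖ * (‖B‖ * ‖Φ s t‖) := by
    intro B s
    calc ‖(ContinuousLinearMap.adjoint (Φ s t)).comp (B.comp (Φ s t))‖
        ≤ ‖ContinuousLinearMap.adjoint (Φ s t)‖ * ‖B.comp (Φ s t)‖ :=
          ContinuousLinearMap.opNorm_comp_le _ _
      _ ≤ ‖Φ s t‖ * (‖B‖ * ‖Φ s t‖) := by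
          rw [LinearIsometryEquiv.norm_map]
          exact mul_le_mul_of_nonneg_left (ContinuousLinearMap.opNorm_comp_le _ _) (norm_nonneg _)
  have hee : ∀ s : ℝ, Real.exp (-μ * (s - t)) * Real.exp (-μ * (s - t)) =
      Real.exp (2 * μ * t) * Real.exp (-(2 * μ) * s) := by
    intro s
    rw [← Real.exp_add, ← Real.exp_add]
    ring_nf
  have hFbound : ∀ s : ℝ, t ≤ s → ‖F s‖ ≤ C * Real.exp (-(2 * μ) * s) := by
    intro s hs
    have hΦn : ‖Φ s t‖ ≤ K * Real.exp (-μ * (s - t)) := hΦ_bound t s ht hs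
    have h1 : ‖F s‖ ≤ ‖Φ s t‖ * (‖Q s‖ * ‖Φ s t‖) := hcomp_bound (Q s) s
    calc ‖F s‖ ≤ ‖Φ s t‖ * (‖Q s‖ * ‖Φ s t‖) := h1
      _ ≤ (K * Real.exp (-μ * (s - t))) * (q₂ * (K * Real.exp (-μ * (s - t)))) :=
          mul_le_mul hΦn (mul_le_mul (hq₂' s) hΦn (norm_nonneg _) hq₂)
            (mul_nonneg (norm_nonneg _) (norm_nonneg _)) (by positivity)
      _ = q₂ * (K * K) * (Real.exp (-μ * (s - t)) * Real.exp (-μ * (s - t))) := by ring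
      _ = C * Real.exp (-(2 * μ) * s) := by rw [hee s, hC]; ring
  have hexp_int : IntegrableOn (fun s => C * Real.exp (-(2 * μ) * s)) (Set.Ici t) := by
    rw [integrableOn_Ici_iff_integrableOn_Ioi]
    exact (exp_neg_integrableOn_Ioi t (by positivity)).const_mul C
  have hFint : IntegrableOn F (Set.Ici t) := by
    refine Integrable.mono' hexp_int hFcont.aestronglyMeasurable.restrict ?_
    filter_upwards [ae_restrict_mem measurableSet_Ici] with s hs
    exact hFbound s hs
  have hlim1 : Tendsto (fun T => ∫ s in t..T, F s) atTop (𝓝 (∫ s in Set.Ici t, F s)) := by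
    rw [integral_Ici_eq_integral_Ioi]
    exact intervalIntegral_tendsto_integral_Ioi t (hFint.mono_set Set.Ioi_subset_Ici_self)
      tendsto_id
  -- g T → 0
  have hMP0 : 0 ≤ MP := le_trans (norm_nonneg _) (hPbdd t ht)
  set D : ℝ := MP * (K * K) * Real.exp (2 * μ * t) with hD
  have hexp0 : Tendsto (fun T : ℝ => Real.exp (-(2 * μ) * T)) atTop (𝓝 0) := by
    have h1 : Tendsto (fun T : ℝ => (2 * μ) * T) atTop atTop :=
      Tendsto.const_mul_atTop (by positivity) tendsto_id
    simp only [neg_mul]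
    exact Real.tendsto_exp_neg_atTop_nhds_zero.comp h1
  have hlim2 : Tendsto g atTop (𝓝 0) := by
    apply squeeze_zero_norm' (a := fun T => D * Real.exp (-(2 * μ) * T))
    · filter_upwards [eventually_ge_atTop t] with T hT
      have hΦn : ‖Φ T t‖ ≤ K * Real.exp (-μ * (T - t)) := hΦ_bound t T ht hT
      have hPn : ‖P T‖ ≤ MP := hPbdd T (le_trans ht hT)
      calc ‖g T‖ ≤ ‖Φ T t‖ * (‖P T‖ * ‖Φ T t‖) := hcomp_bound (P T) T
        _ ≤ (K * Real.exp (-μ * (T - t))) * (MP * (K * Real.exp (-μ * (T - t)))) :=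
            mul_le_mul hΦn (mul_le_mul hPn hΦn (norm_nonneg _) hMP0)
              (mul_nonneg (norm_nonneg _) (norm_nonneg _)) (by positivity)
        _ = MP * (K * K) * (Real.exp (-μ * (T - t)) * Real.exp (-μ * (T - t))) := by ring
        _ = D * Real.exp (-(2 * μ) * T) := by rw [hee T, hD]; ring
    · simpa using hexp0.const_mul D
  -- conclude
  have hconst : Tendsto (fun T => g T + ∫ s in t..T, F s) atTop
      (𝓝 (0 + ∫ s in Set.Ici t, F s)) := hlim2.add hlim1
  have heq : (fun T => g T + ∫ s in t..T, F s) =ᶠ[atTop] fun _ => P t := by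
    filter_upwards [eventually_ge_atTop t] with T hT
    exact (hFTC T hT).symm
  have huniq := tendsto_nhds_unique (Filter.Tendsto.congr' heq hconst) tendsto_const_nhds
  rw [zero_add] at huniq
  exact huniq.symm

/-- Uniqueness of the bounded solution of the Lyapunov differential equation
`P' + AᵀP + PA + Q = 0` for a uniformly exponentially stable system: any bounded
continuously differentiable symmetric solution equals
`P(t) = ∫_t^∞ Φ(s,t)ᵀ Q(s) Φ(s,t) ds`, and any two bounded solutions coincide. -/
theorem lyapunov_equation_bounded_solution_unique
    (n : ℕ)
    (A : ℝ → EuclideanSpace ℝ (Fin n) →L[ℝ] EuclideanSpace ℝ (Fin n))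
    (hAcont : Continuous A) (MA : ℝ) (hAbdd : ∀ t : ℝ, ‖A t‖ ≤ MA)
    (Φ : ℝ → ℝ → EuclideanSpace ℝ (Fin n) →L[ℝ] EuclideanSpace ℝ (Fin n))
    (hΦ_id : ∀ s : ℝ, Φ s s = 1)
    (hΦ_deriv : ∀ s t : ℝ, HasDerivAt (fun τ => Φ τ s) ((A t).comp (Φ t s)) t)
    (hΦ_cocycle : ∀ r s t : ℝ, (Φ t s).comp (Φ s r) = Φ t r)
    (K μ : ℝ) (hK : 1 ≤ K) (hμ : 0 < μ)
    (hΦ_bound : ∀ s t : ℝ, 0 ≤ s → s ≤ t → ‖Φ t s‖ ≤ K * Real.exp (-μ * (t - s)))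
    (Q : ℝ → EuclideanSpace ℝ (Fin n) →L[ℝ] EuclideanSpace ℝ (Fin n))
    (hQcont : Continuous Q) (hQsym : ∀ t : ℝ, IsSelfAdjoint (Q t))
    (q₁ q₂ : ℝ) (hq₁ : 0 < q₁) (hq₁₂ : q₁ ≤ q₂)
    (hQlb : ∀ t : ℝ, ∀ x : EuclideanSpace ℝ (Fin n), q₁ * ‖x‖ ^ 2 ≤ ⟪Q t x, x⟫)
    (hQub : ∀ t : ℝ, ∀ x : EuclideanSpace ℝ (Fin n), ⟪Q t x, x⟫ ≤ q₂ * ‖x‖ ^ 2)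
    (P : ℝ → EuclideanSpace ℝ (Fin n) →L[ℝ] EuclideanSpace ℝ (Fin n))
    (hPsym : ∀ t : ℝ, IsSelfAdjoint (P t))
    (hPbdd : ∃ MP : ℝ, ∀ t : ℝ, 0 ≤ t → ‖P t‖ ≤ MP)
    (hPode : ∀ t : ℝ, 0 ≤ t →
      HasDerivAt P
        (-(ContinuousLinearMap.adjoint (A t)).comp (P t) - (P t).comp (A t) - Q t) t) :
    (∀ t : ℝ, 0 ≤ t →
      P t = ∫ s in Set.Ici t,
        (ContinuousLinearMap.adjoint (Φ s t)).comp ((Q s).comp (Φ s t))) ∧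
    (∀ P₂ : ℝ → EuclideanSpace ℝ (Fin n) →L[ℝ] EuclideanSpace ℝ (Fin n),
      (∃ MP₂ : ℝ, ∀ t : ℝ, 0 ≤ t → ‖P₂ t‖ ≤ MP₂) →
      (∀ t : ℝ, 0 ≤ t →
        HasDerivAt P₂
          (-(ContinuousLinearMap.adjoint (A t)).comp (P₂ t) - (P₂ t).comp (A t) - Q t) t) →
      ∀ t : ℝ, 0 ≤ t → P₂ t = P t) := by
  have hq₂ : 0 ≤ q₂ := le_of_lt (lt_of_lt_of_le hq₁ hq₁₂)
  have hQnorm : ∀ s : ℝ, ‖Q s‖ ≤ q₂ := fun s =>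
    opnorm_le_of_quadform (Q s) (hQsym s) hq₂
      (fun x => le_trans (by positivity) (hQlb s x)) (hQub s)
  obtain ⟨MP, hMP⟩ := hPbdd
  have hmain := lyap_key n A Φ hΦ_id hΦ_deriv K μ hK hμ hΦ_bound Q hQcont q₂ hq₂ hQnorm
    P MP hMP hPode
  refine ⟨hmain, ?_⟩
  intro P₂ hP₂bdd hP₂ode t ht
  obtain ⟨MP₂, hMP₂⟩ := hP₂bdd
  rw [lyap_key n A Φ hΦ_id hΦ_deriv K μ hK hμ hΦ_bound Q hQcont q₂ hq₂ hQnorm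
    P₂ MP₂ hMP₂ hP₂ode t ht, hmain t ht]
end

section
/- A scalar system x' = a(t)x with bounded continuous a has an exponential dichotomy if and only if either 0 < β^i ≤ β^s or β^i ≤ β^s < 0, where β^i and β^s are the lower and upper Bohl exponents of a. Consequently its exponential dichotomy spectrum equals the interval [β^i, β^s]. -/
open MeasureTheory intervalIntegral Filter

/-- A scalar system `ξ' = c(t)ξ` has an exponential dichotomy if either the transition
function `exp (∫_{t₀}^t c)` decays uniformly exponentially forward in time (projection
`P = 1`), or grows uniformly exponentially (projection `P = 0`, bound backward in time). -/
def ScalarExpDichotomy (c : ℝ → ℝ) : Prop :=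
  (∃ K : ℝ, 1 ≤ K ∧ ∃ α : ℝ, 0 < α ∧ ∀ t₀ t : ℝ, 0 ≤ t₀ → t₀ ≤ t →
      Real.exp (∫ s in t₀..t, c s) ≤ K * Real.exp (-α * (t - t₀))) ∨
  (∃ K : ℝ, 1 ≤ K ∧ ∃ α : ℝ, 0 < α ∧ ∀ t₀ t : ℝ, 0 ≤ t → t ≤ t₀ →
      Real.exp (∫ s in t₀..t, c s) ≤ K * Real.exp (α * (t - t₀)))

-- sufficiency core lemma
lemma suff_aux (a : ℝ → ℝ) (hcont : Continuous a) (M : ℝ) (hM : ∀ t : ℝ, |a t| ≤ M)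
    {c : ℝ} (hc : c < 0)
    (h : ∀ᶠ p in (atTop ×ˢ atTop : Filter (ℝ × ℝ)),
        (1 / p.2) * ∫ τ in p.1..(p.1 + p.2), a τ ≤ c) :
    ∃ K : ℝ, 1 ≤ K ∧ ∃ α : ℝ, 0 < α ∧ ∀ t₀ t : ℝ, 0 ≤ t₀ → t₀ ≤ t →
      Real.exp (∫ s in t₀..t, a s) ≤ K * Real.exp (-α * (t - t₀)) := by
  have hM0 : 0 ≤ M := le_trans (abs_nonneg _) (hM 0)
  rw [prod_atTop_atTop_eq] at h
  obtain ⟨q, hq⟩ := eventually_atTop.mp h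
  set T : ℝ := max q.1 0 with hT
  set H₀ : ℝ := max q.2 1 with hH₀
  have hT0 : 0 ≤ T := le_max_right _ _
  have hH₀1 : (1:ℝ) ≤ H₀ := le_max_right _ _
  have key : ∀ u H : ℝ, T ≤ u → H₀ ≤ H → (∫ τ in u..(u + H), a τ) ≤ c * H := by
    intro u H hu hH
    have hHpos : (0:ℝ) < H := lt_of_lt_of_le one_pos (le_trans hH₀1 hH)
    have := hq (u, H) (Prod.mk_le_mk.mpr ⟨le_trans (le_max_left _ _) hu,
      le_trans (le_max_left _ _) hH⟩)
    simp only [one_div] at this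
    rw [inv_mul_le_iff₀ hHpos] at this
    linarith [this]
  set α : ℝ := -c with hα
  have hαpos : 0 < α := by simp [hα]; linarith
  set C : ℝ := (M + α) * (T + H₀) with hC
  have hC0 : 0 ≤ C := by positivity
  refine ⟨Real.exp C, Real.one_le_exp hC0, α, hαpos, ?_⟩
  intro t₀ t ht₀ ht
  have claim : (∫ s in t₀..t, a s) ≤ -α * (t - t₀) + C := by
    set u : ℝ := max t₀ T with hu
    have hut₀ : t₀ ≤ u := le_max_left _ _
    have huT : T ≤ u := le_max_right _ _
    have husub : u - t₀ ≤ T := by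
      have : u ≤ T + t₀ := max_le (by linarith) (by linarith)
      linarith
    by_cases hcase : t ≤ u + H₀
    · have h1 : ‖∫ s in t₀..t, a s‖ ≤ M * |t - t₀| :=
        intervalIntegral.norm_integral_le_of_norm_le_const fun x _ => by
          rw [Real.norm_eq_abs]; exact hM x
      rw [Real.norm_eq_abs] at h1
      have h1' : (∫ s in t₀..t, a s) ≤ M * |t - t₀| := le_trans (le_abs_self _) h1
      rw [abs_of_nonneg (show (0:ℝ) ≤ t - t₀ by linarith)] at h1'
      have h2 : t - t₀ ≤ T + H₀ := by linarith
      have h3 : M * (t - t₀) ≤ M * (T + H₀) := mul_le_mul_of_nonneg_left h2 hM0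
      have h4 : α * (t - t₀) ≤ α * (T + H₀) := mul_le_mul_of_nonneg_left h2 hαpos.le
      rw [hC]; nlinarith
    · push_neg at hcase
      have hint1 : IntervalIntegrable a volume t₀ u := hcont.intervalIntegrable _ _
      have hint2 : IntervalIntegrable a volume u t := hcont.intervalIntegrable _ _
      have hsplit : (∫ s in t₀..u, a s) + (∫ s in u..t, a s) = ∫ s in t₀..t, a s :=
        intervalIntegral.integral_add_adjacent_intervals hint1 hint2
      have hb1 : ‖∫ s in t₀..u, a s‖ ≤ M * |u - t₀| :=
        intervalIntegral.norm_integral_le_of_norm_le_const fun x _ => by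
          rw [Real.norm_eq_abs]; exact hM x
      rw [Real.norm_eq_abs] at hb1
      have hb0 : (∫ s in t₀..u, a s) ≤ M * |u - t₀| := le_trans (le_abs_self _) hb1
      rw [abs_of_nonneg (show (0:ℝ) ≤ u - t₀ by linarith)] at hb0
      have hb1' : (∫ s in t₀..u, a s) ≤ M * T :=
        le_trans hb0 (mul_le_mul_of_nonneg_left husub hM0)
      have hb2 : (∫ s in u..t, a s) ≤ c * (t - u) := by
        have := key u (t - u) huT (by linarith)
        have heq : u + (t - u) = t := by ring
        rwa [heq] at this
      have h4 : α * (u - t₀) ≤ α * T := mul_le_mul_of_nonneg_left husub hαpos.le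
      rw [hC]
      nlinarith [mul_le_mul_of_nonneg_left hH₀1 hαpos.le]
  calc Real.exp (∫ s in t₀..t, a s) ≤ Real.exp (-α * (t - t₀) + C) :=
        Real.exp_le_exp.mpr claim
    _ = Real.exp C * Real.exp (-α * (t - t₀)) := by
        rw [← Real.exp_add]; ring_nf

-- necessity core lemma
lemma nec_aux (a : ℝ → ℝ) {K α : ℝ} (hK : 1 ≤ K) (hα : 0 < α)
    (h : ∀ t₀ t : ℝ, 0 ≤ t₀ → t₀ ≤ t →
        Real.exp (∫ s in t₀..t, a s) ≤ K * Real.exp (-α * (t - t₀))) :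
    ∀ᶠ p in (atTop ×ˢ atTop : Filter (ℝ × ℝ)),
      (1 / p.2) * ∫ τ in p.1..(p.1 + p.2), a τ ≤ -α / 2 := by
  rw [prod_atTop_atTop_eq]
  rw [eventually_atTop]
  refine ⟨(0, max 1 (2 * Real.log K / α)), ?_⟩
  rintro ⟨t₀, H⟩ hp
  obtain ⟨ht₀, hH⟩ := Prod.mk_le_mk.mp hp
  have hH1 : (1:ℝ) ≤ H := le_trans (le_max_left _ _) hH
  have hHpos : (0:ℝ) < H := lt_of_lt_of_le one_pos hH1
  have hK0 : (0:ℝ) < K := lt_of_lt_of_le one_pos hK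
  have hlog : 0 ≤ Real.log K := Real.log_nonneg hK
  have hlog2 : Real.log K ≤ α * H / 2 := by
    have h2 : 2 * Real.log K / α ≤ H := le_trans (le_max_right _ _) hH
    rw [div_le_iff₀ hα] at h2
    linarith
  have h1 := h t₀ (t₀ + H) ht₀ (by linarith)
  rw [show t₀ + H - t₀ = H by ring] at h1
  rw [← Real.exp_log hK0, ← Real.exp_add] at h1
  have h2 : (∫ s in t₀..(t₀ + H), a s) ≤ Real.log K + -α * H := Real.exp_le_exp.mp h1
  have h3 : (1 / H) * (∫ s in t₀..(t₀ + H), a s) ≤ (1 / H) * (Real.log K + -α * H) :=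
    mul_le_mul_of_nonneg_left h2 (by positivity)
  refine le_trans h3 ?_
  have h4 : Real.log K + -α * H ≤ (-α / 2) * H := by nlinarith
  have h5 : (1 / H) * (Real.log K + -α * H) ≤ (1 / H) * ((-α / 2) * H) :=
    mul_le_mul_of_nonneg_left h4 (by positivity)
  refine le_trans h5 (le_of_eq ?_)
  field_simp

-- integral symmetry for negation
lemma int_neg_symm (a : ℝ → ℝ) (t₀ t : ℝ) :
    (∫ s in t₀..t, a s) = ∫ s in t..t₀, (fun s => -a s) s := by
  simp [intervalIntegral.integral_neg, intervalIntegral.integral_symm t₀ t]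

-- second disjunct for a ↔ first disjunct for -a
lemma disj_symm (a : ℝ → ℝ) :
    (∃ K : ℝ, 1 ≤ K ∧ ∃ α : ℝ, 0 < α ∧ ∀ t₀ t : ℝ, 0 ≤ t → t ≤ t₀ →
      Real.exp (∫ s in t₀..t, a s) ≤ K * Real.exp (α * (t - t₀))) ↔
    (∃ K : ℝ, 1 ≤ K ∧ ∃ α : ℝ, 0 < α ∧ ∀ t₀ t : ℝ, 0 ≤ t₀ → t₀ ≤ t →
      Real.exp (∫ s in t₀..t, (fun s => -a s) s) ≤ K * Real.exp (-α * (t - t₀))) := by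
  constructor
  · rintro ⟨K, hK, α, hα, hb⟩
    exact ⟨K, hK, α, hα, fun t₀ t h0 hle => by
      have := hb t t₀ h0 hle
      rw [int_neg_symm a t t₀] at this
      rw [show -α * (t - t₀) = α * (t₀ - t) by ring]
      exact this⟩
  · rintro ⟨K, hK, α, hα, hb⟩
    exact ⟨K, hK, α, hα, fun t₀ t h0 hle => by
      have := hb t t₀ h0 hle
      rw [show α * (t - t₀) = -α * (t₀ - t) by ring, int_neg_symm a t₀ t]
      exact this⟩

lemma bohl_abs_bdd (a : ℝ → ℝ) (M : ℝ) (hM : ∀ t : ℝ, |a t| ≤ M) :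
    ∀ᶠ p in (atTop ×ˢ atTop : Filter (ℝ × ℝ)),
      |(1 / p.2) * ∫ τ in p.1..(p.1 + p.2), a τ| ≤ M := by
  rw [prod_atTop_atTop_eq, eventually_atTop]
  refine ⟨(0, 1), ?_⟩
  rintro ⟨t₀, H⟩ hp
  obtain ⟨_, hH⟩ := Prod.mk_le_mk.mp hp
  have hHpos : (0:ℝ) < H := lt_of_lt_of_le one_pos hH
  have h1 : ‖∫ τ in t₀..(t₀ + H), a τ‖ ≤ M * |t₀ + H - t₀| :=
    intervalIntegral.norm_integral_le_of_norm_le_const fun x _ => by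
      rw [Real.norm_eq_abs]; exact hM x
  rw [Real.norm_eq_abs, show t₀ + H - t₀ = H by ring, abs_of_pos hHpos] at h1
  rw [abs_mul, abs_of_pos (show (0:ℝ) < 1 / H by positivity)]
  calc (1 / H) * |∫ τ in t₀..(t₀ + H), a τ| ≤ (1 / H) * (M * H) :=
        mul_le_mul_of_nonneg_left h1 (by positivity)
    _ = M := by field_simp

lemma dich_iff (a : ℝ → ℝ) (hcont : Continuous a) (M : ℝ) (hM : ∀ t : ℝ, |a t| ≤ M) :
    ScalarExpDichotomy a ↔
      (0 < liminf (fun p : ℝ × ℝ => (1 / p.2) * ∫ τ in p.1..(p.1 + p.2), a τ)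
          (atTop ×ˢ atTop) ∨
        limsup (fun p : ℝ × ℝ => (1 / p.2) * ∫ τ in p.1..(p.1 + p.2), a τ)
          (atTop ×ˢ atTop) < 0) := by
  set F : Filter (ℝ × ℝ) := atTop ×ˢ atTop with hF
  set g : ℝ × ℝ → ℝ := fun p => (1 / p.2) * ∫ τ in p.1..(p.1 + p.2), a τ with hg
  have habs := bohl_abs_bdd a M hM
  have hba : F.IsBoundedUnder (· ≤ ·) g :=
    ⟨M, eventually_map.mpr (habs.mono fun p hp => le_trans (le_abs_self _) hp)⟩
  have hbb : F.IsBoundedUnder (· ≥ ·) g :=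
    ⟨-M, eventually_map.mpr (habs.mono fun p hp => neg_le_of_abs_le hp)⟩
  have hcb_le : F.IsCoboundedUnder (· ≤ ·) g := hbb.isCoboundedUnder_le
  have hcb_ge : F.IsCoboundedUnder (· ≥ ·) g := hba.isCoboundedUnder_ge
  have hMneg : ∀ t : ℝ, |(-a) t| ≤ M := fun t => by rw [Pi.neg_apply, abs_neg]; exact hM t
  have hgneg : ∀ p : ℝ × ℝ, (1 / p.2) * (∫ τ in p.1..(p.1 + p.2), (fun s => -a s) τ) = -g p := by
    intro p
    rw [hg]
    simp [intervalIntegral.integral_neg]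
  rw [ScalarExpDichotomy]
  constructor
  · rintro (⟨K, hK, α, hα, hb⟩ | h2)
    · right
      have hev := nec_aux a hK hα hb
      have : limsup g F ≤ -α / 2 := limsup_le_of_le hcb_le hev
      linarith
    · left
      obtain ⟨K, hK, α, hα, hb⟩ := (disj_symm a).mp h2
      have hev := nec_aux (fun s => -a s) hK hα hb
      have hev' : ∀ᶠ p in F, α / 2 ≤ g p := by
        refine hev.mono fun p hp => ?_
        rw [hgneg p] at hp
        linarith
      have : α / 2 ≤ liminf g F := le_liminf_of_le hcb_ge hev'
      linarith
  · rintro (h1 | h2)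
    · right
      apply (disj_symm a).mpr
      set c : ℝ := liminf g F with hc
      have hev : ∀ᶠ p in F, c / 2 < g p :=
        eventually_lt_of_lt_liminf (by linarith) hbb
      have hev' : ∀ᶠ p in F,
          (1 / p.2) * (∫ τ in p.1..(p.1 + p.2), (fun s => -a s) τ) ≤ -(c / 2) := by
        refine hev.mono fun p hp => ?_
        rw [hgneg p]
        linarith
      exact suff_aux (fun s => -a s) hcont.neg M hMneg (by linarith) hev'
    · left
      set c : ℝ := limsup g F with hc
      have hev : ∀ᶠ p in F, g p < c / 2 :=
        eventually_lt_of_limsup_lt (by linarith) hba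
      exact suff_aux a hcont M hM (show c / 2 < 0 by linarith)
        (hev.mono fun p hp => hp.le)


/-- A scalar system `x' = a(t)x` with bounded continuous `a` has an exponential dichotomy
iff `0 < β^i` or `β^s < 0`, where `β^i ≤ β^s` are the lower and upper Bohl exponents;
consequently its exponential dichotomy spectrum equals `[β^i, β^s]`. -/
theorem scalar_dichotomy_iff_bohl_and_spectrum
    (a : ℝ → ℝ) (hcont : Continuous a) (M : ℝ) (hM : ∀ t : ℝ, |a t| ≤ M) :
    (ScalarExpDichotomy a ↔
      (0 < liminf (fun p : ℝ × ℝ => (1 / p.2) * ∫ τ in p.1..(p.1 + p.2), a τ)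
          (atTop ×ˢ atTop) ∨
        limsup (fun p : ℝ × ℝ => (1 / p.2) * ∫ τ in p.1..(p.1 + p.2), a τ)
          (atTop ×ˢ atTop) < 0)) ∧
    {μ : ℝ | ¬ ScalarExpDichotomy fun t => a t - μ} =
      Set.Icc
        (liminf (fun p : ℝ × ℝ => (1 / p.2) * ∫ τ in p.1..(p.1 + p.2), a τ)
          (atTop ×ˢ atTop))
        (limsup (fun p : ℝ × ℝ => (1 / p.2) * ∫ τ in p.1..(p.1 + p.2), a τ)
          (atTop ×ˢ atTop)) := by
  refine ⟨dich_iff a hcont M hM, ?_⟩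
  ext μ
  simp only [Set.mem_setOf_eq, Set.mem_Icc]
  have hc' : Continuous fun t => a t - μ := hcont.sub continuous_const
  have hM' : ∀ t : ℝ, |a t - μ| ≤ M + |μ| := fun t =>
    (abs_sub (a t) μ).trans (by linarith [hM t])
  rw [dich_iff _ hc' _ hM']
  set F : Filter (ℝ × ℝ) := atTop ×ˢ atTop with hF
  set g : ℝ × ℝ → ℝ := fun p => (1 / p.2) * ∫ τ in p.1..(p.1 + p.2), a τ with hg
  set g' : ℝ × ℝ → ℝ :=
    fun p => (1 / p.2) * ∫ τ in p.1..(p.1 + p.2), (fun t => a t - μ) τ with hg'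
  have habs := bohl_abs_bdd a M hM
  have hba : F.IsBoundedUnder (· ≤ ·) g :=
    ⟨M, eventually_map.mpr (habs.mono fun p hp => le_trans (le_abs_self _) hp)⟩
  have hbb : F.IsBoundedUnder (· ≥ ·) g :=
    ⟨-M, eventually_map.mpr (habs.mono fun p hp => neg_le_of_abs_le hp)⟩
  have hcb_le : F.IsCoboundedUnder (· ≤ ·) g := hbb.isCoboundedUnder_le
  have hcb_ge : F.IsCoboundedUnder (· ≥ ·) g := hba.isCoboundedUnder_ge
  have h21 : ∀ᶠ p : ℝ × ℝ in F, (1:ℝ) ≤ p.2 := by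
    rw [hF, prod_atTop_atTop_eq, eventually_atTop]
    exact ⟨(0, 1), fun p hp => (Prod.mk_le_mk.mp hp).2⟩
  have hev : ∀ᶠ p in F, g' p = g p - μ := by
    refine h21.mono fun p hp => ?_
    have hH : p.2 ≠ 0 := by intro h0; rw [h0] at hp; linarith
    rw [hg', hg]
    simp only
    rw [intervalIntegral.integral_sub (hcont.intervalIntegrable _ _)
      (intervalIntegrable_const), intervalIntegral.integral_const,
      show p.1 + p.2 - p.1 = p.2 by ring, smul_eq_mul]
    field_simp
  have hlimsup : limsup g' F = limsup g F - μ := by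
    rw [limsup_congr hev]
    exact limsup_sub_const F g μ hba hcb_le
  have hliminf : liminf g' F = liminf g F - μ := by
    rw [liminf_congr hev]
    exact liminf_sub_const F g μ hcb_ge hbb
  rw [show (liminf (fun p : ℝ × ℝ => (1 / p.2) * ∫ τ in p.1..(p.1 + p.2), a τ - μ) F)
      = liminf g' F from rfl] at *
  rw [hliminf, hlimsup, not_or, not_lt, not_lt, sub_nonpos, sub_nonneg]
end

section
/- Invariance of a block structure under the Riccati flow: let P(t) be the solution of the matrix Riccati differential equation P' = B(t)P + PB(t)ᵀ − P C̃(t)ᵀC̃(t) P + G(t) where B(t) = [[B₁(t), B₁₂(t)],[0, B₂(t)]] is block upper triangular, C̃(t) = [C̃₁(t), C̃₂(t)], and G(t) = diag(G₁(t), 0) with zero off-diagonal blocks. If P(t₀) = diag(P₁(t₀), 0) with P₁(t₀) ⪰ 0, then P(t) = diag(P₁(t), 0) for all t ≥ t₀, where P₁ solves the reduced Riccati equation P₁' = B₁P₁ + P₁B₁ᵀ − P₁C̃₁ᵀC̃₁P₁ + G₁. -/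
open Matrix Set

attribute [local instance] Matrix.linftyOpNormedRing Matrix.linftyOpNormedSpace

namespace RiccatiAux

variable {n' : Type*} [Fintype n'] [DecidableEq n']

/-- The identity between the pi type and matrices, as a continuous linear equivalence
(with the `linfty` operator norm on matrices). -/
noncomputable def matCLE (n' : Type*) [Fintype n'] [DecidableEq n'] :
    ((n' → n' → ℝ) ≃L[ℝ] Matrix n' n' ℝ) :=
  (Matrix.ofLinearEquiv ℝ).toContinuousLinearEquiv

lemma matHasDerivAt {f : ℝ → Matrix n' n' ℝ} {f' : Matrix n' n' ℝ} {t : ℝ}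
    (h : ∀ i j, HasDerivAt (fun s => f s i j) (f' i j) t) : HasDerivAt f f' t := by
  have h1 : HasDerivAt (fun s => ((matCLE n').symm (f s))) ((matCLE n').symm f') t := by
    rw [hasDerivAt_pi]; intro i; rw [hasDerivAt_pi]; intro j; exact h i j
  have h2 := ((matCLE n').toContinuousLinearMap.hasFDerivAt).comp_hasDerivAt t h1
  have e1 : (fun s => (matCLE n') ((matCLE n').symm (f s))) = f :=
    funext fun s => (matCLE n').apply_symm_apply (f s)
  have e2 : (matCLE n') ((matCLE n').symm f') = f' := (matCLE n').apply_symm_apply f'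
  rw [← e1, ← e2]
  exact h2

lemma matContinuous {f : ℝ → Matrix n' n' ℝ}
    (h : ∀ i j, Continuous fun t => f t i j) : Continuous f := by
  have h1 : Continuous fun t => ((matCLE n').symm (f t)) :=
    continuous_pi fun i => continuous_pi fun j => h i j
  have h2 := (matCLE n').continuous.comp h1
  have e1 : (fun s => (matCLE n') ((matCLE n').symm (f s))) = f :=
    funext fun s => (matCLE n').apply_symm_apply (f s)
  rw [← e1]
  exact h2

end RiccatiAux

open RiccatiAux

/-- Invariance of the block structure under the Riccati flow: for the Riccati equation
`P' = B P + P Bᵀ − P C̃ᵀ C̃ P + G` with block upper triangular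
`B = [[B₁, B₁₂],[0, B₂]]`, `C̃ = [C̃₁ C̃₂]` and `G = diag(G₁, 0)`, a block-diagonal initial
condition `P(t₀) = diag(P₁(t₀), 0)` with `P₁(t₀) ⪰ 0` propagates: `P(t) = diag(P₁(t), 0)`
for all `t ≥ t₀`, where `P₁` solves the reduced Riccati equation. -/
theorem riccati_block_structure_invariant
    (k q p : ℕ) (t₀ : ℝ)
    (B₁ : ℝ → Matrix (Fin k) (Fin k) ℝ) (B₁₂ : ℝ → Matrix (Fin k) (Fin q) ℝ)
    (B₂ : ℝ → Matrix (Fin q) (Fin q) ℝ)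
    (C₁ : ℝ → Matrix (Fin p) (Fin k) ℝ) (C₂ : ℝ → Matrix (Fin p) (Fin q) ℝ)
    (G₁ : ℝ → Matrix (Fin k) (Fin k) ℝ)
    (hB₁ : ∀ i j, Continuous fun t => B₁ t i j)
    (hB₁₂ : ∀ i j, Continuous fun t => B₁₂ t i j)
    (hB₂ : ∀ i j, Continuous fun t => B₂ t i j)
    (hC₁ : ∀ i j, Continuous fun t => C₁ t i j)
    (hC₂ : ∀ i j, Continuous fun t => C₂ t i j)
    (hG₁ : ∀ i j, Continuous fun t => G₁ t i j)
    (P : ℝ → Matrix (Fin k ⊕ Fin q) (Fin k ⊕ Fin q) ℝ)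
    (P₁ : ℝ → Matrix (Fin k) (Fin k) ℝ)
    (hP_ode : ∀ (t : ℝ) (i j : Fin k ⊕ Fin q), HasDerivAt (fun s => P s i j)
      ((fromBlocks (B₁ t) (B₁₂ t) 0 (B₂ t) * P t +
        P t * (fromBlocks (B₁ t) (B₁₂ t) 0 (B₂ t))ᵀ -
        P t * (fromCols (C₁ t) (C₂ t))ᵀ * fromCols (C₁ t) (C₂ t) * P t +
        fromBlocks (G₁ t) 0 0 0 : Matrix (Fin k ⊕ Fin q) (Fin k ⊕ Fin q) ℝ) i j) t)
    (hP₁_ode : ∀ (t : ℝ) (i j : Fin k), HasDerivAt (fun s => P₁ s i j)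
      ((B₁ t * P₁ t + P₁ t * (B₁ t)ᵀ - P₁ t * (C₁ t)ᵀ * C₁ t * P₁ t + G₁ t : Matrix (Fin k) (Fin k) ℝ) i j) t)
    (hP₁0 : (P₁ t₀).PosSemidef)
    (hP0 : P t₀ = fromBlocks (P₁ t₀) 0 0 0) :
    ∀ t : ℝ, t₀ ≤ t → P t = fromBlocks (P₁ t) 0 0 0 := by
  intro T hT
  classical
  set Bm : ℝ → Matrix (Fin k ⊕ Fin q) (Fin k ⊕ Fin q) ℝ :=
    fun t => fromBlocks (B₁ t) (B₁₂ t) 0 (B₂ t) with hBm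
  set Mm : ℝ → Matrix (Fin k ⊕ Fin q) (Fin k ⊕ Fin q) ℝ :=
    fun t => (fromCols (C₁ t) (C₂ t))ᵀ * fromCols (C₁ t) (C₂ t) with hMm
  set Gm : ℝ → Matrix (Fin k ⊕ Fin q) (Fin k ⊕ Fin q) ℝ :=
    fun t => fromBlocks (G₁ t) 0 0 0 with hGm
  set v : ℝ → Matrix (Fin k ⊕ Fin q) (Fin k ⊕ Fin q) ℝ → Matrix (Fin k ⊕ Fin q) (Fin k ⊕ Fin q) ℝ :=
    fun t X => Bm t * X + X * (Bm t)ᵀ - X * Mm t * X + Gm t with hv_def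
  set Q : ℝ → Matrix (Fin k ⊕ Fin q) (Fin k ⊕ Fin q) ℝ :=
    fun t => fromBlocks (P₁ t) 0 0 0 with hQ_def
  -- `P` solves the ODE with vector field `v`
  have hvP : ∀ t, v t (P t) =
      fromBlocks (B₁ t) (B₁₂ t) 0 (B₂ t) * P t +
        P t * (fromBlocks (B₁ t) (B₁₂ t) 0 (B₂ t))ᵀ -
        P t * (fromCols (C₁ t) (C₂ t))ᵀ * fromCols (C₁ t) (C₂ t) * P t +
        fromBlocks (G₁ t) 0 0 0 := by
    intro t
    simp only [hv_def, hBm, hMm, hGm, Matrix.mul_assoc]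
  have hP' : ∀ t, HasDerivAt P (v t (P t)) t := by
    intro t
    refine matHasDerivAt fun i j => ?_
    rw [hvP t]
    exact hP_ode t i j
  -- the key block computation
  have hMmb : ∀ t, Mm t = fromBlocks ((C₁ t)ᵀ * C₁ t) ((C₁ t)ᵀ * C₂ t)
      ((C₂ t)ᵀ * C₁ t) ((C₂ t)ᵀ * C₂ t) := by
    intro t
    simp only [hMm]
    rw [transpose_fromCols, fromRows_mul_fromCols]
  have hvQ : ∀ t, v t (Q t) =
      fromBlocks (B₁ t * P₁ t + P₁ t * (B₁ t)ᵀ - P₁ t * (C₁ t)ᵀ * C₁ t * P₁ t + G₁ t) 0 0 0 := by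
    intro t
    simp only [hv_def, hQ_def, hBm, hGm, hMmb t, fromBlocks_transpose, transpose_zero,
      fromBlocks_multiply, Matrix.mul_zero, Matrix.zero_mul, add_zero, zero_add,
      sub_eq_add_neg, fromBlocks_neg, fromBlocks_add, neg_zero, Matrix.mul_assoc]
  -- `Q` solves the same ODE
  have hQ' : ∀ t, HasDerivAt Q (v t (Q t)) t := by
    intro t
    refine matHasDerivAt fun i j => ?_
    rw [hvQ t]
    rcases i with i | i <;> rcases j with j | j
    · simpa [hQ_def, sub_eq_add_neg, Matrix.mul_assoc] using hP₁_ode t i j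
    · simpa [hQ_def] using hasDerivAt_const t (0 : ℝ)
    · simpa [hQ_def] using hasDerivAt_const t (0 : ℝ)
    · simpa [hQ_def] using hasDerivAt_const t (0 : ℝ)
  -- continuity of the solutions
  have hPc : Continuous P :=
    matContinuous fun i j =>
      continuous_iff_continuousAt.mpr fun t => (hP_ode t i j).continuousAt
  have hP₁c : ∀ i j, Continuous fun t => P₁ t i j := fun i j =>
    continuous_iff_continuousAt.mpr fun t => (hP₁_ode t i j).continuousAt
  have hQc : Continuous Q := by
    refine matContinuous fun i j => ?_
    rcases i with i | i <;> rcases j with j | j <;>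
      simp only [hQ_def, fromBlocks_apply₁₁, fromBlocks_apply₁₂, fromBlocks_apply₂₁,
        fromBlocks_apply₂₂, Matrix.zero_apply]
    · exact hP₁c i j
    · exact continuous_const
    · exact continuous_const
    · exact continuous_const
  -- continuity of the coefficients
  have hBmc : Continuous Bm := by
    refine matContinuous fun i j => ?_
    rcases i with i | i <;> rcases j with j | j <;>
      simp only [hBm, fromBlocks_apply₁₁, fromBlocks_apply₁₂, fromBlocks_apply₂₁,
        fromBlocks_apply₂₂, Matrix.zero_apply]
    · exact hB₁ i j
    · exact hB₁₂ i j
    · exact continuous_const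
    · exact hB₂ i j
  have hBmtc : Continuous fun t => (Bm t)ᵀ := by
    refine matContinuous fun i j => ?_
    simp only [transpose_apply]
    rcases j with j | j <;> rcases i with i | i <;>
      simp only [hBm, fromBlocks_apply₁₁, fromBlocks_apply₁₂, fromBlocks_apply₂₁,
        fromBlocks_apply₂₂, Matrix.zero_apply]
    · exact hB₁ j i
    · exact hB₁₂ j i
    · exact continuous_const
    · exact hB₂ j i
  have hCme : ∀ (a : Fin p) (b : Fin k ⊕ Fin q),
      Continuous fun t => fromCols (C₁ t) (C₂ t) a b := by
    intro a b
    rcases b with b | b <;> simp only [fromCols_apply_inl, fromCols_apply_inr]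
    · exact hC₁ a b
    · exact hC₂ a b
  have hMmc : Continuous Mm := by
    refine matContinuous fun i j => ?_
    have : (fun t => Mm t i j) =
        fun t => ∑ l, fromCols (C₁ t) (C₂ t) l i * fromCols (C₁ t) (C₂ t) l j := by
      funext t
      simp only [hMm, Matrix.mul_apply, Matrix.transpose_apply]
    rw [this]
    exact continuous_finset_sum _ fun l _ => (hCme l i).mul (hCme l j)
  -- bounds on the compact interval
  have ht₀mem : t₀ ∈ Icc t₀ T := ⟨le_refl t₀, hT⟩
  obtain ⟨RP, hRP⟩ := (isCompact_Icc (a := t₀) (b := T)).exists_bound_of_continuousOn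
    hPc.continuousOn
  obtain ⟨RQ, hRQ⟩ := (isCompact_Icc (a := t₀) (b := T)).exists_bound_of_continuousOn
    hQc.continuousOn
  obtain ⟨aB, haB⟩ := (isCompact_Icc (a := t₀) (b := T)).exists_bound_of_continuousOn
    hBmc.continuousOn
  obtain ⟨aBt, haBt⟩ := (isCompact_Icc (a := t₀) (b := T)).exists_bound_of_continuousOn
    hBmtc.continuousOn
  obtain ⟨aM, haM⟩ := (isCompact_Icc (a := t₀) (b := T)).exists_bound_of_continuousOn
    hMmc.continuousOn
  have haB0 : 0 ≤ aB := le_trans (norm_nonneg _) (haB t₀ ht₀mem)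
  have haBt0 : 0 ≤ aBt := le_trans (norm_nonneg _) (haBt t₀ ht₀mem)
  have haM0 : 0 ≤ aM := le_trans (norm_nonneg _) (haM t₀ ht₀mem)
  set R : ℝ := max RP RQ with hR_def
  have hR0 : 0 ≤ R := le_trans (le_trans (norm_nonneg _) (hRP t₀ ht₀mem)) (le_max_left _ _)
  set L : ℝ := aB + aBt + 2 * R * aM with hL_def
  have hL0 : 0 ≤ L := by positivity
  set S : ℝ → Set (Matrix (Fin k ⊕ Fin q) (Fin k ⊕ Fin q) ℝ) :=
    fun s => if s ∈ Icc t₀ T then Metric.closedBall 0 R else ∅ with hS_def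
  -- Lipschitz estimate
  have hlip : ∀ s, LipschitzOnWith L.toNNReal (v s) (S s) := by
    intro s
    by_cases hs : s ∈ Icc t₀ T
    · rw [hS_def]
      simp only [if_pos hs]
      refine LipschitzOnWith.of_dist_le_mul fun x hx y hy => ?_
      rw [Real.coe_toNNReal _ hL0, dist_eq_norm, dist_eq_norm]
      have hx' : ‖x‖ ≤ R := by simpa using mem_closedBall_zero_iff.mp hx
      have hy' : ‖y‖ ≤ R := by simpa using mem_closedBall_zero_iff.mp hy
      have hsub : v s x - v s y =
          Bm s * (x - y) + (x - y) * (Bm s)ᵀ -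
            (x * Mm s * (x - y) + (x - y) * Mm s * y) := by
        simp only [hv_def]
        noncomm_ring
      rw [hsub]
      set d := x - y with hd
      have bB : ‖Bm s‖ ≤ aB := haB s hs
      have bBt : ‖(Bm s)ᵀ‖ ≤ aBt := haBt s hs
      have bM : ‖Mm s‖ ≤ aM := haM s hs
      have h1 : ‖Bm s * d‖ ≤ aB * ‖d‖ :=
        le_trans (norm_mul_le _ _) (mul_le_mul_of_nonneg_right bB (norm_nonneg _))
      have h2 : ‖d * (Bm s)ᵀ‖ ≤ ‖d‖ * aBt :=
        le_trans (norm_mul_le _ _) (mul_le_mul_of_nonneg_left bBt (norm_nonneg _))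
      have q1 : ‖x * Mm s‖ ≤ R * aM :=
        le_trans (norm_mul_le _ _) (mul_le_mul hx' bM (norm_nonneg _) hR0)
      have q2 : ‖d * Mm s‖ ≤ ‖d‖ * aM :=
        le_trans (norm_mul_le _ _) (mul_le_mul_of_nonneg_left bM (norm_nonneg _))
      have h3 : ‖x * Mm s * d‖ ≤ R * aM * ‖d‖ :=
        le_trans (norm_mul_le _ _) (mul_le_mul_of_nonneg_right q1 (norm_nonneg _))
      have h4 : ‖d * Mm s * y‖ ≤ ‖d‖ * aM * R :=
        le_trans (norm_mul_le _ _)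
          (mul_le_mul q2 hy' (norm_nonneg _) (by positivity))
      have e2 := norm_sub_le (Bm s * d + d * (Bm s)ᵀ) (x * Mm s * d + d * Mm s * y)
      have e1 := norm_add_le (Bm s * d) (d * (Bm s)ᵀ)
      have e3 := norm_add_le (x * Mm s * d) (d * Mm s * y)
      have hLd : L * ‖d‖ = aB * ‖d‖ + ‖d‖ * aBt + (R * aM * ‖d‖ + ‖d‖ * aM * R) := by
        rw [hL_def]; ring
      rw [hLd]
      linarith
    · rw [hS_def]
      simp only [if_neg hs]
      exact lipschitzOnWith_empty _ _
  -- apply uniqueness of ODE solutions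
  have hmemP : ∀ s ∈ Ico t₀ T, P s ∈ S s := by
    intro s hs
    rw [hS_def]
    simp only [if_pos (Ico_subset_Icc_self hs)]
    rw [Metric.mem_closedBall, dist_zero_right]
    exact le_trans (hRP s (Ico_subset_Icc_self hs)) (le_max_left _ _)
  have hmemQ : ∀ s ∈ Ico t₀ T, Q s ∈ S s := by
    intro s hs
    rw [hS_def]
    simp only [if_pos (Ico_subset_Icc_self hs)]
    rw [Metric.mem_closedBall, dist_zero_right]
    exact le_trans (hRQ s (Ico_subset_Icc_self hs)) (le_max_right _ _)
  have hinit : P t₀ = Q t₀ := by rw [hP0, hQ_def]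
  have hEq : EqOn P Q (Icc t₀ T) :=
    ODE_solution_unique_of_mem_Icc_right (fun s _ => hlip s)
      hPc.continuousOn (fun s _ => (hP' s).hasDerivWithinAt) hmemP
      hQc.continuousOn (fun s _ => (hQ' s).hasDerivWithinAt) hmemQ
      hinit
  have := hEq ⟨hT, le_refl T⟩
  rw [this, hQ_def]
end
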